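/- arXiv:1203.6807 — 4 statements merged into one kernel-verified Lean document; each statement's English description precedes it below -/
import Mathlib

section
/- The number of saturated chains of length 2 in the Dyck lattice D_n equals the sum over all Dyck paths γ of semilength n of: 2·(number of unordered pairs of disjoint occurrences of the factor du in γ) + (number of occurrences of the factor ddu in γ) + (number of occurrences of the factor duu in γ). -/
/-- Height of the path after `i` steps: `true` = up, `false` = down. -/
def heights (w : List Bool) (i : ℕ) : ℤ :=
  ((w.take i).count true : ℤ) - ((w.take i).count false : ℤ)

/-- `w` is a Dyck word. -/
def IsDyck (w : List Bool) : Prop :=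
  w.count true = w.count false ∧ ∀ i ≤ w.length, 0 ≤ heights w i

instance : DecidablePred IsDyck := fun w => by unfold IsDyck; infer_instance

/-- Dyck paths of semilength `n`. -/
def DyckPath (n : ℕ) := {v : List.Vector Bool (2 * n) // IsDyck v.1}

instance (n : ℕ) : Fintype (DyckPath n) := Subtype.fintype _

/-- The containment order on Dyck paths: `γ` lies weakly below `γ'`. -/
def DyckLE {n : ℕ} (γ γ' : DyckPath n) : Prop := ∀ i, heights γ.1.1 i ≤ heights γ'.1.1 i

def DyckLT {n : ℕ} (γ γ' : DyckPath n) : Prop := DyckLE γ γ' ∧ γ ≠ γ'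

def DyckCovBy {n : ℕ} (γ γ' : DyckPath n) : Prop :=
  DyckLT γ γ' ∧ ∀ δ : DyckPath n, DyckLT γ δ → ¬ DyckLT δ γ'

/-- Number of occurrences of the factor `f` in `w`. -/
def occ (f w : List Bool) : ℕ :=
  ((Finset.range w.length).filter fun i => f <+: w.drop i).card

/-- Saturated chains of length `h` in the Dyck lattice of order `n`. -/
def SatChain (n h : ℕ) :=
  {c : Fin (h + 1) → DyckPath n // ∀ i : Fin h, DyckCovBy (c i.castSucc) (c i.succ)}

/-- Number of unordered pairs of disjoint occurrences of the valley factor `du` in `w`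
(counted as pairs of positions `i < j` with `j ≥ i + 2`). -/
def valleyPairs (w : List Bool) : ℕ :=
  ((Finset.range w.length ×ˢ Finset.range w.length).filter fun p =>
    p.1 + 2 ≤ p.2 ∧ [false, true] <+: w.drop p.1 ∧ [false, true] <+: w.drop p.2).card

/-!
Covering relations in `D_n` are exactly the raisings of one valley `du` to a peak `ud`: if
`γ < γ'`, a lowest point of `γ` among those where `γ` lies strictly below `γ'` is the bottom of
a valley of `γ`, and by parity raising it keeps the path below `γ'`. So a saturated chain of
length 2 is a path `γ`, a valley `j` of `γ` and a valley of the raised path. Raising the valley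
at `j` destroys it, keeps the other valleys of `γ` (valleys are never adjacent), and creates a
valley at `j - 1` exactly when `γ` has `ddu` at `j - 1`, and one at `j + 1` exactly when `γ`
has `duu` at `j`. Summing over the `v` valleys of `γ` yields `v (v - 1) = 2 (v choose 2)` plus
one for each occurrence of `ddu` and of `duu`.
-/

open Finset

section Words

variable {α : Type*}

theorem cons_prefix_drop_iff {a : α} {f w : List α} {i : ℕ} :
    a :: f <+: w.drop i ↔ w[i]? = some a ∧ f <+: w.drop (i + 1) := by
  rcases lt_or_ge i w.length with hi | hi
  · rw [List.drop_eq_getElem_cons hi, List.cons_prefix_cons, List.getElem?_eq_getElem hi,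
      Option.some_inj, eq_comm]
  · simp [List.drop_eq_nil_of_le hi, List.getElem?_eq_none hi]

theorem take_append_append_drop_of_prefix_drop {f w : List α} {i : ℕ} (h : f <+: w.drop i) :
    w.take i ++ f ++ w.drop (i + f.length) = w := by
  obtain ⟨t, ht⟩ := h
  have ht' : w.drop (i + f.length) = t := by rw [← List.drop_drop, ← ht, List.drop_left]
  rw [ht', List.append_assoc, ht, List.take_append_drop]

variable [DecidableEq α]

def occurrences (f w : List α) : Finset ℕ :=
  {i ∈ range w.length | f <+: w.drop i}

theorem mem_occurrences_cons {a : α} {f w : List α} {i : ℕ} :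
    i ∈ occurrences (a :: f) w ↔ w[i]? = some a ∧ f <+: w.drop (i + 1) := by
  rw [occurrences, mem_filter, mem_range, cons_prefix_drop_iff, and_iff_right_iff_imp]
  exact fun h => (List.getElem?_eq_some_iff.mp h.1).1

end Words

theorem card_occurrences (f w : List Bool) : #(occurrences f w) = occ f w := rfl

abbrev valleys (w : List Bool) : Finset ℕ := occurrences [false, true] w

theorem mem_valleys {w : List Bool} {i : ℕ} :
    i ∈ valleys w ↔ w[i]? = some false ∧ w[i + 1]? = some true := by
  simp [mem_occurrences_cons, cons_prefix_drop_iff]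

section Heights

theorem heights_zero (w : List Bool) : heights w 0 = 0 := by simp [heights]

theorem heights_append (u v : List Bool) (i : ℕ) :
    heights (u ++ v) i = heights u i + heights v (i - u.length) := by
  simp only [heights, List.take_append, List.count_append]
  push_cast
  ring

theorem heights_of_length_le {w : List Bool} {i : ℕ} (h : w.length ≤ i) :
    heights w i = heights w w.length := by
  rw [heights, heights, List.take_of_length_le h, List.take_length]

theorem heights_step {w : List Bool} {i : ℕ} {b : Bool} (h : w[i]? = some b) :
    heights w (i + 1) = heights w i + if b then 1 else -1 := by
  rw [heights, heights, List.take_add_one, h]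
  cases b <;> simp <;> ring

theorem abs_heights_succ_sub_le (w : List Bool) (i : ℕ) :
    |heights w (i + 1) - heights w i| ≤ 1 := by
  rcases h : w[i]? with _ | b
  · rw [List.getElem?_eq_none_iff] at h
    rw [heights_of_length_le h, heights_of_length_le (by omega : w.length ≤ i + 1)]
    simp
  · rw [heights_step h]
    cases b <;> simp

theorem getElem?_eq_some_false_of_heights_succ_le {w : List Bool} {i : ℕ} (hi : i < w.length)
    (h : heights w (i + 1) ≤ heights w i) : w[i]? = some false := by
  obtain ⟨_ | _, hb⟩ : ∃ b, w[i]? = some b := ⟨_, List.getElem?_eq_getElem hi⟩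
  · exact hb
  · rw [heights_step hb, if_pos rfl] at h
    omega

theorem getElem?_eq_some_true_of_heights_le_succ {w : List Bool} {i : ℕ} (hi : i < w.length)
    (h : heights w i ≤ heights w (i + 1)) : w[i]? = some true := by
  obtain ⟨_ | _, hb⟩ : ∃ b, w[i]? = some b := ⟨_, List.getElem?_eq_getElem hi⟩
  · rw [heights_step hb, if_neg Bool.false_ne_true] at h
    omega
  · exact hb

theorem heights_eq_two_mul_sub (w : List Bool) (i : ℕ) :
    heights w i = 2 * ((w.take i).count true : ℤ) - (w.take i).length := by
  rw [heights, ← List.count_true_add_count_false (w.take i)]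
  push_cast
  ring

theorem even_heights_sub {w w' : List Bool} (h : w.length = w'.length) (i : ℕ) :
    Even (heights w i - heights w' i) := by
  rw [heights_eq_two_mul_sub, heights_eq_two_mul_sub, List.length_take, List.length_take, h]
  exact ⟨(w.take i).count true - (w'.take i).count true, by ring⟩

theorem eq_of_heights_eq {w w' : List Bool} (hlen : w.length = w'.length)
    (h : ∀ i, heights w i = heights w' i) : w = w' := by
  refine List.ext_getElem? fun i => ?_
  rcases hb : w[i]? with _ | b <;> rcases hb' : w'[i]? with _ | b'
  · rfl
  · rw [List.getElem?_eq_none_iff] at hb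
    have := (List.getElem?_eq_some_iff.mp hb').1
    omega
  · rw [List.getElem?_eq_none_iff] at hb'
    have := (List.getElem?_eq_some_iff.mp hb).1
    omega
  · have := heights_step hb
    rw [h, h, heights_step hb'] at this
    cases b <;> cases b' <;> simp_all

end Heights

section RaiseValley

def raiseValley (w : List Bool) (j : ℕ) : List Bool :=
  w.take j ++ [true, false] ++ w.drop (j + 2)

variable {w : List Bool} {j : ℕ}

theorem take_append_append_drop_of_mem_valleys (h : j ∈ valleys w) :
    w.take j ++ [false, true] ++ w.drop (j + 2) = w :=
  take_append_append_drop_of_prefix_drop (mem_filter.mp h).2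

theorem length_take_of_mem_valleys (h : j ∈ valleys w) : (w.take j).length = j := by
  have := (List.getElem?_eq_some_iff.mp (mem_valleys.mp h).2).1
  simp only [List.length_take]
  omega

theorem length_raiseValley (h : j ∈ valleys w) : (raiseValley w j).length = w.length := by
  conv_rhs => rw [← take_append_append_drop_of_mem_valleys h]
  simp [raiseValley]

theorem getElem?_raiseValley (h : j ∈ valleys w) (i : ℕ) :
    (raiseValley w j)[i]? =
      if i = j then some true else if i = j + 1 then some false else w[i]? := by
  conv_rhs => rw [← take_append_append_drop_of_mem_valleys h]
  have hj := length_take_of_mem_valleys h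
  simp only [raiseValley, List.getElem?_append, hj, List.length_append, List.length_cons,
    List.length_nil]
  split_ifs <;> first | omega | simp_all

theorem heights_raiseValley (h : j ∈ valleys w) (i : ℕ) :
    heights (raiseValley w j) i = heights w i + if i = j + 1 then 2 else 0 := by
  have hpeak : ∀ k, heights [true, false] k = heights [false, true] k + if k = 1 then 2 else 0
    | 0 | 1 => by simp [heights]
    | k + 2 => by simp [heights]
  conv_rhs => rw [← take_append_append_drop_of_mem_valleys h]
  simp only [raiseValley, heights_append, List.length_append, length_take_of_mem_valleys h,
    List.length_cons, List.length_nil, hpeak]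
  have : i - j = 1 ↔ i = j + 1 := by omega
  simp only [this]
  ring

theorem isDyck_raiseValley (hw : IsDyck w) (h : j ∈ valleys w) :
    IsDyck (raiseValley w j) := by
  have hlen := length_raiseValley h
  have hj := (List.getElem?_eq_some_iff.mp (mem_valleys.mp h).2).1
  have hcount (u : List Bool) : heights u u.length = u.count true - u.count false := by
    simp [heights]
  have hend := heights_raiseValley h (raiseValley w j).length
  rw [hcount, hlen, hcount, if_neg (by omega), add_zero] at hend
  refine ⟨by have := hw.1; omega, fun i hi => ?_⟩
  rw [heights_raiseValley h]
  have := hw.2 i (by omega)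
  split_ifs <;> omega

end RaiseValley

section Valleys

variable {w : List Bool} {i j : ℕ}

theorem succ_notMem_valleys (h : i ∈ valleys w) : i + 1 ∉ valleys w := by
  rw [mem_valleys] at *
  grind

theorem mem_valleys_raiseValley (h : j ∈ valleys w) :
    i ∈ valleys (raiseValley w j) ↔ (i ∈ valleys w ∧ i ≠ j) ∨
      (i + 1 = j ∧ i ∈ occurrences [false, false, true] w) ∨
      (i = j + 1 ∧ j ∈ occurrences [false, true, true] w) := by
  have hj := mem_valleys.mp h
  simp only [mem_occurrences_cons, cons_prefix_drop_iff, List.nil_prefix, and_true,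
    getElem?_raiseValley h]
  grind

theorem card_valleys_raiseValley (h : j ∈ valleys w) :
    #(valleys (raiseValley w j)) = #(valleys w) - 1 +
      #{i ∈ occurrences [false, false, true] w | i + 1 = j} +
      if j ∈ occurrences [false, true, true] w then 1 else 0 := by
  have hsucc := succ_notMem_valleys h
  have hsplit : valleys (raiseValley w j) = (valleys w).erase j ∪
      {i ∈ occurrences [false, false, true] w | i + 1 = j} ∪
      if j ∈ occurrences [false, true, true] w then {j + 1} else ∅ := by
    ext i
    rw [mem_valleys_raiseValley h]
    split_ifs <;>
      simp only [mem_union, mem_erase, mem_filter, mem_singleton, notMem_empty, or_false] <;>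
      tauto
  rw [hsplit, card_union_of_disjoint, card_union_of_disjoint, card_erase_of_mem h]
  · split_ifs <;> rfl
  · rw [disjoint_left]
    intro i hi hi'
    simp only [mem_erase, mem_filter] at hi hi'
    exact succ_notMem_valleys hi.2 (hi'.2 ▸ h)
  · split_ifs
    · rw [disjoint_singleton_right, mem_union, mem_erase, mem_filter, not_or]
      exact ⟨fun hj => hsucc hj.2, fun hj => by omega⟩
    · exact disjoint_empty_right _

theorem valleyPairs_eq_choose (w : List Bool) : valleyPairs w = (#(valleys w)).choose 2 := by
  rw [valleyPairs, ← card_product_filter_lt]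
  congr 1
  ext ⟨a, b⟩
  have hgap (ha : a ∈ valleys w) (hb : b ∈ valleys w) (hab : a < b) : a + 2 ≤ b := by
    rcases (show b = a + 1 ∨ a + 2 ≤ b by omega) with rfl | h
    · exact absurd hb (succ_notMem_valleys ha)
    · exact h
  simp only [mem_filter, mem_product, valleys, occurrences] at hgap ⊢
  grind

theorem sum_card_valleys_raiseValley (w : List Bool) :
    ∑ j ∈ valleys w, #(valleys (raiseValley w j)) =
      2 * valleyPairs w + occ [false, false, true] w + occ [false, true, true] w := by
  have hpairs : ∑ _j ∈ valleys w, (#(valleys w) - 1) = 2 * valleyPairs w := by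
    rw [sum_const, smul_eq_mul, valleyPairs_eq_choose, Nat.choose_two_right,
      Nat.mul_div_cancel' (Nat.even_mul_pred_self _).two_dvd]
  have hddu : ∑ j ∈ valleys w, #{i ∈ occurrences [false, false, true] w | i + 1 = j} =
      occ [false, false, true] w := by
    have hsub : ∀ i ∈ occurrences [false, false, true] w, i + 1 ∈ valleys w := by
      intro i hi
      simp only [mem_occurrences_cons, cons_prefix_drop_iff] at hi ⊢
      exact hi.2
    exact (card_eq_sum_card_fiberwise hsub).symm
  have hduu : ∑ j ∈ valleys w, (if j ∈ occurrences [false, true, true] w then 1 else 0) =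
      occ [false, true, true] w := by
    rw [sum_boole, Nat.cast_id, filter_mem_eq_inter, inter_eq_right.mpr, card_occurrences]
    intro i hi
    simp only [mem_occurrences_cons, cons_prefix_drop_iff, List.nil_prefix, and_true] at hi ⊢
    exact ⟨hi.1, hi.2.1⟩
  rw [sum_congr rfl fun j hj => card_valleys_raiseValley hj, sum_add_distrib, sum_add_distrib,
    hpairs, hddu, hduu]

end Valleys

namespace DyckPath

variable {n : ℕ}

theorem length_word (γ : DyckPath n) : γ.1.1.length = 2 * n := γ.1.2

theorem ext_heights {γ δ : DyckPath n} (h : ∀ i, heights γ.1.1 i = heights δ.1.1 i) :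
    γ = δ :=
  Subtype.ext (Subtype.ext (eq_of_heights_eq (by rw [γ.length_word, δ.length_word]) h))

theorem heights_of_le (γ : DyckPath n) {i : ℕ} (h : 2 * n ≤ i) : heights γ.1.1 i = 0 := by
  rw [heights_of_length_le (by rw [γ.length_word]; exact h)]
  simp only [heights, List.take_length, γ.2.1, sub_self]

theorem even_heights_sub (γ δ : DyckPath n) (i : ℕ) :
    Even (heights γ.1.1 i - heights δ.1.1 i) :=
  _root_.even_heights_sub (γ.length_word.trans δ.length_word.symm) i

def raise (γ : DyckPath n) (j : ℕ) (h : j ∈ valleys γ.1.1) : DyckPath n :=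
  ⟨⟨raiseValley γ.1.1 j, (length_raiseValley h).trans γ.1.2⟩, isDyck_raiseValley γ.2 h⟩

theorem heights_raise (γ : DyckPath n) {j : ℕ} (h : j ∈ valleys γ.1.1) (i : ℕ) :
    heights (γ.raise j h).1.1 i = heights γ.1.1 i + if i = j + 1 then 2 else 0 :=
  heights_raiseValley h i

theorem raise_injective (γ : DyckPath n) {j j' : ℕ} {h : j ∈ valleys γ.1.1}
    {h' : j' ∈ valleys γ.1.1} (he : γ.raise j h = γ.raise j' h') : j = j' := by
  by_contra hne
  have : heights (γ.raise j h).1.1 (j + 1) = heights (γ.raise j' h').1.1 (j + 1) := by rw [he]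
  rw [heights_raise, heights_raise, if_pos rfl, if_neg (by omega)] at this
  omega

theorem dyckCovBy_raise (γ : DyckPath n) {j : ℕ} (h : j ∈ valleys γ.1.1) :
    DyckCovBy γ (γ.raise j h) := by
  have hraise := γ.heights_raise h
  refine ⟨⟨fun i => by rw [hraise]; split_ifs <;> omega, fun he => ?_⟩, ?_⟩
  · have : heights γ.1.1 (j + 1) = heights (γ.raise j h).1.1 (j + 1) := by rw [← he]
    rw [hraise, if_pos rfl] at this
    omega
  rintro δ ⟨hγδ, hγδ'⟩ ⟨hδ, hδ'⟩
  have hoff (i : ℕ) (hi : i ≠ j + 1) : heights δ.1.1 i = heights γ.1.1 i := by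
    have := hδ i
    rw [hraise, if_neg hi, add_zero] at this
    exact le_antisymm this (hγδ i)
  -- at `j + 1` parity leaves only the heights of `γ` and of the raised path
  obtain ⟨d, hd⟩ := δ.even_heights_sub γ (j + 1)
  have hlo := hγδ (j + 1)
  have hhi := hδ (j + 1)
  rw [hraise, if_pos rfl] at hhi
  rcases (show d = 0 ∨ d = 1 by omega) with rfl | rfl
  · exact hγδ' (ext_heights fun i => by
      by_cases hi : i = j + 1
      · subst hi; omega
      · rw [hoff i hi])
  · exact hδ' (ext_heights fun i => by
      rw [hraise]
      by_cases hi : i = j + 1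
      · subst hi; rw [if_pos rfl]; omega
      · rw [hoff i hi, if_neg hi, add_zero])

theorem exists_raise_dyckLE {γ γ' : DyckPath n} (hlt : DyckLT γ γ') :
    ∃ j, ∃ hj : j ∈ valleys γ.1.1, DyckLE (γ.raise j hj) γ' := by
  set D := {p ∈ range (2 * n + 1) | heights γ.1.1 p < heights γ'.1.1 p}
  have hD : D.Nonempty := by
    by_contra hempty
    refine hlt.2 (ext_heights fun i => le_antisymm (hlt.1 i) ?_)
    by_cases hi : i ≤ 2 * n
    · exact not_lt.mp fun h => hempty ⟨i, mem_filter.mpr ⟨mem_range.mpr (by omega), h⟩⟩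
    · rw [γ.heights_of_le (by omega), γ'.heights_of_le (by omega)]
  obtain ⟨p, hpD, hmin⟩ := D.exists_min_image (heights γ.1.1) hD
  obtain ⟨hp, hlow⟩ := mem_filter.mp hpD
  have hp0 : p ≠ 0 := by rintro rfl; simp [heights_zero] at hlow
  have hpn : p < 2 * n := by
    refine lt_of_le_of_ne (by simpa [Nat.lt_succ_iff] using hp) fun he => ?_
    rw [he, γ.heights_of_le le_rfl, γ'.heights_of_le le_rfl] at hlow
    exact lt_irrefl 0 hlow
  have hnbr (q : ℕ) (hq : q ≤ 2 * n) (hγ'q : |heights γ'.1.1 q - heights γ'.1.1 p| ≤ 1) :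
      heights γ.1.1 p ≤ heights γ.1.1 q := by
    by_contra! hqp
    rw [abs_le] at hγ'q
    exact hqp.not_ge (hmin q (mem_filter.mpr ⟨mem_range.mpr (by omega), by omega⟩))
  have hp1 : p - 1 + 1 = p := Nat.sub_add_cancel (Nat.pos_of_ne_zero hp0)
  have hdown : γ.1.1[p - 1]? = some false := by
    refine getElem?_eq_some_false_of_heights_succ_le (by rw [γ.length_word]; omega) ?_
    rw [hp1]
    refine hnbr (p - 1) (by omega) ?_
    simpa [abs_sub_comm, hp1] using abs_heights_succ_sub_le γ'.1.1 (p - 1)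
  have hup : γ.1.1[p]? = some true :=
    getElem?_eq_some_true_of_heights_le_succ (by rw [γ.length_word]; omega)
      (hnbr (p + 1) (by omega) (abs_heights_succ_sub_le _ _))
  refine ⟨p - 1, mem_valleys.mpr ⟨hdown, hp1 ▸ hup⟩, fun i => ?_⟩
  rw [heights_raise, hp1]
  split_ifs with hip
  · obtain ⟨d, hd⟩ := γ'.even_heights_sub γ p
    subst hip
    omega
  · simpa using hlt.1 i

theorem dyckCovBy_iff {γ δ : DyckPath n} :
    DyckCovBy γ δ ↔ ∃ j, ∃ hj : j ∈ valleys γ.1.1, γ.raise j hj = δ := by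
  refine ⟨fun ⟨hlt, hmax⟩ => ?_, fun ⟨j, hj, he⟩ => he ▸ γ.dyckCovBy_raise hj⟩
  obtain ⟨j, hj, hle⟩ := exists_raise_dyckLE hlt
  exact ⟨j, hj, of_not_not fun hne => hmax _ (γ.dyckCovBy_raise hj).1 ⟨hle, hne⟩⟩

noncomputable def valleysEquivUpperCovers (γ : DyckPath n) :
    valleys γ.1.1 ≃ {δ // DyckCovBy γ δ} :=
  Equiv.ofBijective (fun j => ⟨γ.raise j j.2, γ.dyckCovBy_raise j.2⟩)
    ⟨fun j j' he =>
      Subtype.ext (γ.raise_injective (h := j.2) (h' := j'.2) (congrArg Subtype.val he)),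
      fun ⟨_, hδ⟩ => by
        obtain ⟨j, hj, rfl⟩ := dyckCovBy_iff.mp hδ
        exact ⟨⟨j, hj⟩, rfl⟩⟩

theorem card_upperCovers (γ : DyckPath n) :
    Nat.card {δ // DyckCovBy γ δ} = #(valleys γ.1.1) := by
  rw [← Nat.card_congr γ.valleysEquivUpperCovers, Nat.card_eq_finsetCard]

end DyckPath

def satChainTwoEquiv (n : ℕ) :
    SatChain n 2 ≃
      Σ γ : DyckPath n, Σ δ : {δ // DyckCovBy γ δ}, {ε // DyckCovBy δ.1 ε} where
  toFun c := ⟨c.1 0, ⟨c.1 1, c.2 0⟩, ⟨c.1 2, c.2 1⟩⟩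
  invFun t := ⟨![t.1, t.2.1.1, t.2.2.1], fun i => by fin_cases i; exacts [t.2.1.2, t.2.2.2]⟩
  left_inv c := Subtype.ext (funext fun i => by fin_cases i <;> rfl)
  right_inv _ := rfl

/-- The number of saturated chains of length 2 in `D_n` equals the sum over all Dyck paths
`γ` of semilength `n` of `2·#(du,du)_γ + #(ddu)_γ + #(duu)_γ`. -/
theorem dyck_sc2_combinatorial (n : ℕ) :
    Nat.card (SatChain n 2) =
      ∑ γ : DyckPath n,
        (2 * valleyPairs γ.1.1 + occ [false, false, true] γ.1.1 + occ [false, true, true] γ.1.1) := by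
  classical
  rw [Nat.card_congr (satChainTwoEquiv n), Nat.card_sigma]
  refine sum_congr rfl fun γ _ => ?_
  rw [Nat.card_sigma]
  calc ∑ δ : {δ // DyckCovBy γ δ}, Nat.card {ε // DyckCovBy δ.1 ε}
      = ∑ j : valleys γ.1.1, #(valleys (raiseValley γ.1.1 j)) :=
        (Fintype.sum_equiv γ.valleysEquivUpperCovers _ _
          fun j => (γ.raise j j.2).card_upperCovers.symm).symm
    _ = _ := (sum_coe_sort _ _).trans (sum_card_valleys_raiseValley _)
end

section
/- The factors ddu and duu are equidistributed over Dyck paths: for every n and k, the number of Dyck paths of semilength n with exactly k occurrences of the factor ddu equals the number of Dyck paths of semilength n with exactly k occurrences of the factor duu. -/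
/-! Reversing a Dyck path and exchanging its up and down steps is an involution on Dyck paths of
semilength `n`. It carries each occurrence of `ddu` to an occurrence of the reverse-complement
`duu` of that factor, and back, so it restricts to a bijection between the two sets. -/

namespace List

variable {α : Type*}

theorem isPrefix_drop_iff_exists_append {f w : List α} (hf : f ≠ []) {i : ℕ} :
    f <+: w.drop i ↔ ∃ s t, w = s ++ f ++ t ∧ s.length = i := by
  constructor
  · rintro ⟨t, ht⟩
    have hi : i ≤ w.length := by
      by_contra! hlt
      rw [drop_of_length_le hlt.le] at ht
      exact hf (append_eq_nil_iff.mp ht).1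
    exact ⟨w.take i, t, by rw [append_assoc, ht, take_append_drop], by simp [hi]⟩
  · rintro ⟨s, t, rfl, rfl⟩
    simp

theorem exists_append_reverse {f w : List α} {i : ℕ}
    (h : ∃ s t, w = s ++ f ++ t ∧ s.length = i) :
    i + f.length ≤ w.length ∧
      ∃ s t, w.reverse = s ++ f.reverse ++ t ∧ s.length = w.length - f.length - i := by
  obtain ⟨s, t, rfl, rfl⟩ := h
  exact ⟨by simp, t.reverse, s.reverse, by simp, by simp; omega⟩

end List

theorem occ_map_not (f w : List Bool) : occ (f.map not) (w.map not) = occ f w := by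
  simp only [occ, List.length_map, ← List.map_drop,
    List.prefix_map_iff_of_injective Bool.not_injective]

theorem occ_le_occ_reverse {f : List Bool} (hf : f ≠ []) (w : List Bool) :
    occ f w ≤ occ f.reverse w.reverse := by
  have hf' : f.reverse ≠ [] := by simpa using hf
  have hlen : 0 < f.length := List.length_pos_iff.mpr hf
  refine Finset.card_le_card_of_injOn (fun i => w.length - f.length - i) ?_ ?_
  · intro i hi
    simp only [Finset.coe_filter, Set.mem_ofPred_eq, Finset.mem_range, List.length_reverse,
      List.isPrefix_drop_iff_exists_append hf, List.isPrefix_drop_iff_exists_append hf'] at hi ⊢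
    exact ⟨by omega, (List.exists_append_reverse hi.2).2⟩
  · intro i hi j hj hij
    simp only [Finset.coe_filter, Set.mem_ofPred_eq,
      List.isPrefix_drop_iff_exists_append hf] at hi hj
    have := (List.exists_append_reverse hi.2).1
    have := (List.exists_append_reverse hj.2).1
    simp only at hij
    omega

theorem occ_reverse {f : List Bool} (hf : f ≠ []) (w : List Bool) :
    occ f.reverse w.reverse = occ f w :=
  le_antisymm (by simpa using occ_le_occ_reverse (List.reverse_ne_nil_iff.mpr hf) w.reverse)
    (occ_le_occ_reverse hf w)

def revComp (w : List Bool) : List Bool := (w.map not).reverse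

@[simp] theorem length_revComp (w : List Bool) : (revComp w).length = w.length := by
  simp [revComp]

theorem revComp_involutive : Function.Involutive revComp := fun w => by
  simp [revComp, List.map_reverse, Function.comp_def]

@[simp] theorem count_revComp (w : List Bool) (b : Bool) : (revComp w).count b = w.count !b := by
  simp [revComp, ← List.count_map_of_injective w not Bool.not_injective]

theorem occ_revComp {f : List Bool} (hf : f ≠ []) (w : List Bool) :
    occ (revComp f) (revComp w) = occ f w := by
  rw [revComp, revComp, occ_reverse (by simpa using hf), occ_map_not]

theorem heights_revComp {w : List Bool} (hw : w.count true = w.count false) (i : ℕ) :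
    heights (revComp w) i = heights w (w.length - i) := by
  have htake : (revComp w).take i = revComp (w.drop (w.length - i)) := by
    rw [revComp, revComp, List.take_reverse, List.length_map, List.map_drop]
  have hsplit (b : Bool) :
      (w.take (w.length - i)).count b + (w.drop (w.length - i)).count b = w.count b := by
    rw [← List.count_append, List.take_append_drop]
  have := hsplit true
  have := hsplit false
  simp only [heights, htake, count_revComp, Bool.not_true, Bool.not_false]
  omega

theorem IsDyck.revComp {w : List Bool} (hw : IsDyck w) : IsDyck (revComp w) := by
  obtain ⟨hcount, hheights⟩ := hw
  refine ⟨by simp [hcount], fun i _ => ?_⟩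
  rw [heights_revComp hcount]
  exact hheights _ (Nat.sub_le _ _)

def DyckPath.revComp {n : ℕ} (γ : DyckPath n) : DyckPath n :=
  ⟨⟨_root_.revComp γ.1.1, by rw [length_revComp, γ.1.2]⟩, γ.2.revComp⟩

theorem DyckPath.revComp_involutive (n : ℕ) : Function.Involutive (@DyckPath.revComp n) :=
  fun γ => Subtype.ext <| Subtype.ext <| _root_.revComp_involutive γ.1.1

/-- The factors `ddu` and `duu` are equidistributed over Dyck paths. -/
theorem ddu_duu_equidistributed (n k : ℕ) :
    Nat.card {γ : DyckPath n // occ [false, false, true] γ.1.1 = k} =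
      Nat.card {γ : DyckPath n // occ [false, true, true] γ.1.1 = k} := by
  have hddu : revComp [false, false, true] = [false, true, true] := rfl
  refine Nat.card_congr <| (DyckPath.revComp_involutive n).toPerm.subtypeEquiv fun γ => ?_
  show _ ↔ occ [false, true, true] (revComp γ.1.1) = k
  rw [← hddu, occ_revComp (by simp)]
end

section
/- Similarly, the factors dddu and duuu are equidistributed over Dyck paths: for every n and k, the number of Dyck paths of semilength n with exactly k occurrences of dddu equals the number with exactly k occurrences of duuu. -/
/-!
Reading a Dyck path backwards while swapping up and down steps (the reverse complement) is an
involution on Dyck paths of each semilength. It carries the occurrences of a factor `f` at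
position `i` bijectively to occurrences of the reverse complement of `f` at position
`length - |f| - i`, and the reverse complement of `dddu` is `duuu`.
-/

def revcomp (w : List Bool) : List Bool := (w.map not).reverse

@[simp]
lemma revcomp_revcomp (w : List Bool) : revcomp (revcomp w) = w := by
  simp [revcomp, List.map_reverse, Function.comp_def]

@[simp]
lemma length_revcomp (w : List Bool) : (revcomp w).length = w.length := by
  simp [revcomp]

lemma revcomp_append (a b : List Bool) : revcomp (a ++ b) = revcomp b ++ revcomp a := by
  simp [revcomp]

lemma count_revcomp (w : List Bool) (b : Bool) : (revcomp w).count b = w.count (!b) := by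
  rw [revcomp, List.count_reverse, ← List.count_map_of_injective w not Bool.not_injective,
    Bool.not_not]

lemma take_revcomp (w : List Bool) (i : ℕ) :
    (revcomp w).take i = revcomp (w.drop (w.length - i)) := by
  rw [revcomp, List.take_reverse, List.length_map, ← List.map_drop, revcomp]

lemma heights_revcomp {w : List Bool} (hw : w.count true = w.count false) (i : ℕ) :
    heights (revcomp w) i = heights w (w.length - i) := by
  have hsplit (b : Bool) : w.count b =
      (w.take (w.length - i)).count b + (w.drop (w.length - i)).count b := by
    rw [← List.count_append, List.take_append_drop]
  have ht := hsplit true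
  have hf := hsplit false
  simp only [heights, take_revcomp, count_revcomp, Bool.not_true, Bool.not_false]
  omega

lemma IsDyck.revcomp {w : List Bool} (hw : IsDyck w) : IsDyck (revcomp w) := by
  refine ⟨by simp [count_revcomp, hw.1], fun i _ => ?_⟩
  rw [heights_revcomp hw.1]
  exact hw.2 _ (Nat.sub_le _ _)

lemma revcomp_prefix_drop {f w : List Bool} {i : ℕ} (h : f <+: w.drop i) :
    revcomp f <+: (revcomp w).drop (w.length - f.length - i) := by
  obtain ⟨r, hr⟩ := h
  have hw : w = w.take i ++ f ++ r := by rw [List.append_assoc, hr, List.take_append_drop]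
  have hr_len : r.length = w.length - f.length - i := by
    have := congrArg List.length hw
    simp only [List.length_append, List.length_take] at this
    omega
  rw [← hr_len, hw, revcomp_append, revcomp_append, List.drop_left' (length_revcomp r)]
  exact List.prefix_append _ _

lemma occ_le_occ_revcomp {f : List Bool} (hf : f ≠ []) (w : List Bool) :
    occ f w ≤ occ (revcomp f) (revcomp w) := by
  have hf_pos : 0 < f.length := List.length_pos_iff.mpr hf
  have fits {i : ℕ} (h : f <+: w.drop i) : i + f.length ≤ w.length := by
    have := h.length_le
    rw [List.length_drop] at this
    omega
  refine Finset.card_le_card_of_injOn (fun i => w.length - f.length - i) ?_ ?_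
  · intro i hi
    simp only [Finset.coe_filter, Finset.mem_range, Set.mem_ofPred_eq] at hi ⊢
    have := fits hi.2
    exact ⟨by rw [length_revcomp]; omega, revcomp_prefix_drop hi.2⟩
  · intro i hi j hj hij
    simp only [Finset.coe_filter, Finset.mem_range, Set.mem_ofPred_eq] at hi hj hij
    have := fits hi.2
    have := fits hj.2
    omega

lemma occ_revcomp (f w : List Bool) : occ (revcomp f) (revcomp w) = occ f w := by
  rcases eq_or_ne f [] with rfl | hf
  · simp [occ, revcomp]
  refine le_antisymm ?_ (occ_le_occ_revcomp hf w)
  have hf' : revcomp f ≠ [] := by simpa [revcomp] using hf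
  simpa using occ_le_occ_revcomp hf' (revcomp w)

def DyckPath.revcomp {n : ℕ} (γ : DyckPath n) : DyckPath n :=
  ⟨⟨_root_.revcomp γ.1.1, by rw [length_revcomp, γ.1.2]⟩, γ.2.revcomp⟩

lemma DyckPath.revcomp_involutive (n : ℕ) : Function.Involutive (@DyckPath.revcomp n) :=
  fun γ => Subtype.ext <| Subtype.ext <| revcomp_revcomp γ.1.1

/-- The factors `dddu` and `duuu` are equidistributed over Dyck paths. -/
theorem dddu_duuu_equidistributed (n k : ℕ) :
    Nat.card {γ : DyckPath n // occ [false, false, false, true] γ.1.1 = k} =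
      Nat.card {γ : DyckPath n // occ [false, true, true, true] γ.1.1 = k} := by
  refine Nat.card_congr <|
    ((DyckPath.revcomp_involutive n).toPerm _).subtypeEquiv fun γ => ?_
  rw [← occ_revcomp [false, false, false, true] γ.1.1]
  rfl
end

section
/- The formal power series F(q,x) counting Dyck paths by semilength (x) and number of occurrences of the factor duu (q) satisfies the algebraic equation 2qx·F = 1 - 2(1-q)x - √(1 - 4x + 4x² - 4qx²); equivalently, (2qxF - 1 + 2(1-q)x)² = 1 - 4x + 4x² - 4qx². -/
open PowerSeries

/-- `F(q,x) = ∑_γ q^{duu(γ)} x^{|γ|}`, a power series in `x` with polynomial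
coefficients in `q`. -/
noncomputable def Fduu : PowerSeries (Polynomial ℚ) :=
  PowerSeries.mk fun n => ∑ γ : DyckPath n, Polynomial.X ^ occ [false, true, true] γ.1.1

/-! Cut a nonempty Dyck path at its first return, `p = U a D b`. A `duu` of `p` lies inside `a`,
inside `b`, or is the `D` closing the first arch followed by `UU`, which happens exactly when the
first arch of `b` is not a bare peak, i.e. `b.insidePart ≠ 0`. Let `F`, `G`, `H` be the generating
series of all paths weighted by `q^duu`, of all paths weighted by
`q^(duu + [first arch not a peak])`, and of the paths that are empty or begin with a peak `UD`,
weighted by `q^duu`. The decomposition gives `F = 1 + xFG` and `H = 1 + xG`, while splitting by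
the first arch gives `G = qF + (1 - q)H`. Eliminating `G` and `H` leaves
`qxF² - (1 - 2(1 - q)x)F + 1 - (1 - q)x = 0`, and completing the square gives the claim; this
works for an arbitrary weight `q` in a commutative ring. -/

open DyckStep PowerSeries Finset

lemma occ_cons (f : List Bool) (x : Bool) (l : List Bool) :
    occ f (x :: l) = occ f l + if f <+: x :: l then 1 else 0 := by
  rw [occ, occ, card_filter, card_filter, List.length_cons, sum_range_succ']
  simp [List.drop_succ_cons]

lemma occ_duu_true_cons (l : List Bool) :
    occ [false, true, true] (true :: l) = occ [false, true, true] l := by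
  simp [occ_cons, List.cons_prefix_cons]

lemma occ_duu_append_false_cons (l l' : List Bool) :
    occ [false, true, true] (l ++ false :: l') =
      occ [false, true, true] l + occ [false, true, true] l' +
        if [true, true] <+: l' then 1 else 0 := by
  induction l with
  | nil => simp [occ_cons, List.cons_prefix_cons, show occ [false, true, true] [] = 0 from rfl]
  | cons x l ih =>
    have hpre : ([false, true, true] <+: x :: (l ++ false :: l')) ↔
        [false, true, true] <+: x :: l := by
      match l with
      | [] | [_] | _ :: _ :: _ => simp [List.cons_prefix_cons]
    rw [List.cons_append, occ_cons, ih, occ_cons, if_congr hpre rfl rfl]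
    ring

def DyckStep.equivBool : DyckStep ≃ Bool where
  toFun | U => true | D => false
  invFun | true => U | false => D
  left_inv s := by cases s <;> rfl
  right_inv b := by cases b <;> rfl

namespace DyckStep

lemma count_true_map_equivBool (l : List DyckStep) : (l.map equivBool).count true = l.count U :=
  List.count_map_of_injective _ _ equivBool.injective U

lemma count_false_map_equivBool (l : List DyckStep) : (l.map equivBool).count false = l.count D :=
  List.count_map_of_injective _ _ equivBool.injective D

lemma count_U_map_equivBool_symm (l : List Bool) : (l.map equivBool.symm).count U = l.count true :=
  List.count_map_of_injective _ _ equivBool.symm.injective true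

lemma count_D_map_equivBool_symm (l : List Bool) :
    (l.map equivBool.symm).count D = l.count false :=
  List.count_map_of_injective _ _ equivBool.symm.injective false

end DyckStep

namespace DyckWord

def toBoolList (p : DyckWord) : List Bool := p.toList.map equivBool

def duu (p : DyckWord) : ℕ := occ [false, true, true] p.toBoolList

lemma toBoolList_zero : toBoolList 0 = [] := rfl

lemma duu_zero : duu 0 = 0 := rfl

lemma isDyck_toBoolList (p : DyckWord) : IsDyck p.toBoolList := by
  refine ⟨?_, fun i _ => ?_⟩
  · rw [toBoolList, count_true_map_equivBool, count_false_map_equivBool]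
    exact p.count_U_eq_count_D
  · rw [heights, toBoolList, ← List.map_take, count_true_map_equivBool,
      count_false_map_equivBool, sub_nonneg]
    exact_mod_cast p.count_D_le_count_U i

def toDyckPath {n : ℕ} (p : DyckWord) (hp : p.semilength = n) : DyckPath n :=
  ⟨⟨p.toBoolList, by rw [toBoolList, List.length_map, ← two_mul_semilength_eq_length, hp]⟩,
    p.isDyck_toBoolList⟩

def ofDyckPath {n : ℕ} (γ : DyckPath n) : DyckWord where
  toList := γ.1.1.map equivBool.symm
  count_U_eq_count_D := by
    rw [count_U_map_equivBool_symm, count_D_map_equivBool_symm]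
    exact γ.2.1
  count_D_le_count_U i := by
    have h := γ.2.2 (min i γ.1.1.length) (min_le_right _ _)
    rw [heights, ← List.take_take, List.take_length] at h
    rw [← List.map_take, count_U_map_equivBool_symm, count_D_map_equivBool_symm]
    omega

lemma semilength_ofDyckPath {n : ℕ} (γ : DyckPath n) : (ofDyckPath γ).semilength = n := by
  have hlen : γ.1.1.length = 2 * n := γ.1.2
  have := List.count_true_add_count_false γ.1.1
  have := γ.2.1
  rw [semilength, ofDyckPath, count_U_map_equivBool_symm]
  omega

def equivDyckPath (n : ℕ) : {p : DyckWord // p.semilength = n} ≃ DyckPath n where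
  toFun p := toDyckPath p.1 p.2
  invFun γ := ⟨ofDyckPath γ, semilength_ofDyckPath γ⟩
  left_inv p := by
    apply Subtype.ext; apply DyckWord.ext
    simp [ofDyckPath, toDyckPath, toBoolList]
  right_inv γ := by
    apply Subtype.ext; apply Subtype.ext
    simp [ofDyckPath, toDyckPath, toBoolList]

lemma toBoolList_nest_add (a b : DyckWord) :
    (a.nest + b).toBoolList = true :: (a.toBoolList ++ false :: b.toBoolList) := by
  change ([U] ++ a.toList ++ [D] ++ b.toList).map equivBool = _
  simp [toBoolList, equivBool]

lemma true_true_prefix_toBoolList_iff (p : DyckWord) :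
    [true, true] <+: p.toBoolList ↔ p.insidePart ≠ 0 := by
  rcases eq_or_ne p 0 with rfl | hp
  · simp [toBoolList_zero]
  rw [← nest_insidePart_add_outsidePart hp, toBoolList_nest_add, insidePart_add nest_ne_zero,
    insidePart_nest]
  rcases eq_or_ne p.insidePart 0 with ha | ha
  · simp [ha, toBoolList_zero, List.cons_prefix_cons]
  · obtain ⟨s, t, hst⟩ := List.exists_cons_of_ne_nil (toList_ne_nil.mpr ha)
    have hs : s = U := by simpa [hst] using p.insidePart.head_eq_U (toList_ne_nil.mpr ha)
    simp [ha, toBoolList, hst, hs, equivBool, List.cons_prefix_cons]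

lemma duu_nest_add (a b : DyckWord) :
    (a.nest + b).duu = a.duu + b.duu + if b.insidePart = 0 then 0 else 1 := by
  rw [duu, toBoolList_nest_add, occ_duu_true_cons, occ_duu_append_false_cons,
    if_congr (true_true_prefix_toBoolList_iff b) rfl rfl, ite_not, duu, duu]

def ofSemilength (n : ℕ) : Finset DyckWord :=
  univ.map (.subtype fun p : DyckWord => p.semilength = n)

@[simp]
lemma mem_ofSemilength {n : ℕ} {p : DyckWord} : p ∈ ofSemilength n ↔ p.semilength = n := by
  simp [ofSemilength]

lemma ofSemilength_zero : ofSemilength 0 = {0} := by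
  ext p
  rw [mem_ofSemilength, mem_singleton, ← toList_eq_nil, ← List.length_eq_zero_iff,
    ← two_mul_semilength_eq_length]
  omega

lemma ne_zero_of_semilength_eq_succ {n : ℕ} {p : DyckWord} (hp : p.semilength = n + 1) :
    p ≠ 0 := by
  rintro rfl
  simp at hp

lemma sum_ofSemilength_succ {M : Type*} [AddCommMonoid M] (w : DyckWord → M) (n : ℕ) :
    ∑ p ∈ ofSemilength (n + 1), w p =
      ∑ ij ∈ antidiagonal n,
        ∑ a ∈ ofSemilength ij.1, ∑ b ∈ ofSemilength ij.2, w (a.nest + b) := by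
  simp_rw [← sum_product', sum_sigma']
  symm
  refine sum_nbij' (fun x => x.2.1.nest + x.2.2)
    (fun p => ⟨(p.insidePart.semilength, p.outsidePart.semilength), (p.insidePart, p.outsidePart)⟩)
    ?_ ?_ ?_ ?_ (fun _ _ => rfl)
  · rintro ⟨⟨i, j⟩, a, b⟩ hx
    simp only [mem_sigma, HasAntidiagonal.mem_antidiagonal, mem_product, mem_ofSemilength] at hx ⊢
    rw [semilength_add, semilength_nest]
    omega
  · intro p hp
    rw [mem_ofSemilength] at hp
    have := semilength_insidePart_add_semilength_outsidePart_add_one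
      (ne_zero_of_semilength_eq_succ hp)
    simp only [mem_sigma, HasAntidiagonal.mem_antidiagonal, mem_product, mem_ofSemilength,
      and_true]
    omega
  · rintro ⟨⟨i, j⟩, a, b⟩ hx
    simp only [mem_sigma, HasAntidiagonal.mem_antidiagonal, mem_product, mem_ofSemilength] at hx
    simp [insidePart_add nest_ne_zero, outsidePart_add nest_ne_zero, hx.2.1, hx.2.2]
  · intro p hp
    rw [mem_ofSemilength] at hp
    exact nest_insidePart_add_outsidePart (ne_zero_of_semilength_eq_succ hp)

section GenSeries

variable {R : Type*} [CommSemiring R]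

noncomputable def genSeries (w : DyckWord → R) : R⟦X⟧ :=
  PowerSeries.mk fun n => ∑ p ∈ ofSemilength n, w p

lemma coeff_genSeries (w : DyckWord → R) (n : ℕ) :
    coeff n (genSeries w) = ∑ p ∈ ofSemilength n, w p :=
  coeff_mk _ _

lemma genSeries_linear_combination (a b : R) (u v : DyckWord → R) :
    genSeries (fun p => a * u p + b * v p) = C a * genSeries u + C b * genSeries v := by
  ext n
  simp [coeff_genSeries, sum_add_distrib, mul_sum]

lemma genSeries_ite_eq_zero : genSeries (fun p => if p = 0 then (1 : R) else 0) = 1 := by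
  ext n
  simp [coeff_genSeries, coeff_one, eq_comm]

theorem genSeries_eq_of_nest_add {u v w : DyckWord → R}
    (h : ∀ a b, w (a.nest + b) = u a * v b) :
    genSeries w = C (w 0) + X * (genSeries u * genSeries v) := by
  ext (_ | n)
  · simp [coeff_genSeries, ofSemilength_zero]
  · rw [map_add, coeff_C, if_neg n.succ_ne_zero, zero_add, coeff_succ_X_mul, coeff_mul,
      coeff_genSeries, sum_ofSemilength_succ]
    simp only [coeff_genSeries, sum_mul_sum, h]

end GenSeries

section Weights

variable {R : Type*} [CommRing R] (q : R)

lemma genSeries_pow_duu_eq :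
    genSeries (q ^ duu ·) =
      1 + X * (genSeries (q ^ duu ·) *
        genSeries fun p => q ^ (p.duu + if p.insidePart = 0 then 0 else 1)) := by
  have h := genSeries_eq_of_nest_add (w := (q ^ duu ·)) fun a b => by
    rw [duu_nest_add, add_assoc, pow_add]
  rwa [duu_zero, pow_zero, map_one] at h

lemma genSeries_ite_insidePart_eq :
    (genSeries fun p => if p.insidePart = 0 then q ^ p.duu else 0) =
      1 + X * genSeries fun p => q ^ (p.duu + if p.insidePart = 0 then 0 else 1) := by
  have hsplit (a b : DyckWord) :
      (if (a.nest + b).insidePart = 0 then q ^ (a.nest + b).duu else 0) =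
        (if a = 0 then 1 else 0) * q ^ (b.duu + if b.insidePart = 0 then 0 else 1) := by
    rw [insidePart_add nest_ne_zero, insidePart_nest]
    rcases eq_or_ne a 0 with rfl | ha
    · rw [if_pos rfl, if_pos rfl, duu_nest_add, duu_zero, zero_add, one_mul]
    · rw [if_neg ha, if_neg ha, zero_mul]
  rw [genSeries_eq_of_nest_add hsplit, genSeries_ite_eq_zero, one_mul, insidePart_zero,
    if_pos rfl, duu_zero, pow_zero, map_one]

lemma genSeries_pow_duu_add_ite_eq :
    (genSeries fun p => q ^ (p.duu + if p.insidePart = 0 then 0 else 1)) =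
      C q * genSeries (q ^ duu ·) +
        C (1 - q) * genSeries fun p => if p.insidePart = 0 then q ^ p.duu else 0 := by
  rw [← genSeries_linear_combination]
  congr 1
  ext p
  split_ifs <;> ring

theorem genSeries_pow_duu_algebraic_equation :
    (2 * C q * X * genSeries (q ^ duu ·) - 1 + 2 * (1 - C q) * X) ^ 2 =
      1 - 4 * X + 4 * X ^ 2 - 4 * C q * X ^ 2 := by
  have hF := genSeries_pow_duu_eq q
  have hH := genSeries_ite_insidePart_eq q
  have hG := genSeries_pow_duu_add_ite_eq q
  set F := genSeries (q ^ duu ·)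
  rw [map_sub, map_one] at hG
  linear_combination (-4 * C q * X) * ((1 - (1 - C q) * X) * hF + X * F * (hG + (1 - C q) * hH))

end Weights

lemma Fduu_eq_genSeries : Fduu = genSeries ((Polynomial.X : Polynomial ℚ) ^ duu ·) := by
  ext1 n
  rw [Fduu, coeff_mk, coeff_genSeries, ofSemilength, sum_map]
  symm
  apply Fintype.sum_equiv (equivDyckPath n)
  intro p
  rfl

end DyckWord

/-- `2qx·F = 1 - 2(1-q)x - √(1-4x+4x²-4qx²)`, stated algebraically as
`(2qxF - 1 + 2(1-q)x)² = 1 - 4x + 4x² - 4qx²`. -/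
theorem Fduu_algebraic_equation :
    letI q : PowerSeries (Polynomial ℚ) := PowerSeries.C (R := Polynomial ℚ) Polynomial.X
    (2 * q * X * Fduu - 1 + 2 * (1 - q) * X) ^ 2 = 1 - 4 * X + 4 * X ^ 2 - 4 * q * X ^ 2 := by
  rw [DyckWord.Fduu_eq_genSeries]
  exact DyckWord.genSeries_pow_duu_algebraic_equation Polynomial.X
end
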